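/- Let g_n be the number of permutations of length n avoiding k-σ and h_n the number avoiding k-σ-k, where σ is a contiguous pattern and k is greater than all letters of σ. Then h_{n+1} = Σ_{i=0}^{n} C(n,i) g_i g_{n-i} for all n ≥ 0. -/

import Mathlib

/-- `l` is a permutation of `{1, …, n}`. -/
def IsPermOf (n : ℕ) (l : List ℕ) : Prop :=
  l.Perm ((List.range n).map (· + 1))

/-- The word `w` forms the partially ordered pattern `σ`. -/
def FormsPOP (σ w : List ℕ) : Prop :=
  w.length = σ.length ∧
  ∀ i j, i < σ.length → j < σ.length →
    σ.getD i 0 < σ.getD j 0 → w.getD i 0 < w.getD j 0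

/-- occurrence of `k-σ`: a large element to the left of a consecutive occurrence of `σ`. -/
def OccursKS (σ π : List ℕ) : Prop :=
  ∃ A x B w C, π = A ++ x :: (B ++ w ++ C) ∧ FormsPOP σ w ∧ ∀ y ∈ w, y < x

/-- occurrence of `k-σ-k`: a consecutive occurrence of `σ` with a larger element on each side. -/
def OccursKSK (σ π : List ℕ) : Prop :=
  ∃ A x B w C y D, π = A ++ x :: (B ++ w ++ C ++ y :: D) ∧ FormsPOP σ w ∧
    (∀ z ∈ w, z < x) ∧ (∀ z ∈ w, z < y)

/-!
Cut a permutation of `{1, …, n+1}` at its maximum, `π = L ++ (n+1) :: R`. No occurrence of `σ`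
inside a `k-σ`, `σ-k` or `k-σ-k` occurrence can contain the maximum, and the maximum is a valid
large letter for every occurrence on either side of it. Hence `π` avoids `k-σ-k` iff `L` avoids
`k-σ` and `R` avoids `σ-k`; since avoidance is invariant under order-preserving relabelling,
choosing the letters of `L` gives `h (n+1) = ∑ C(n,i) g_i g'_{n-i}`, where `g'` counts `σ-k`
avoiders. The same cut gives `g (n+1) = ∑ C(n,i) g_i c_{n-i}` and `g' (n+1) = ∑ C(n,i) c_i g'_{n-i}`,
with `c` counting permutations with no consecutive occurrence of `σ`, and these two recurrences
force `g = g'`.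
-/

def OccursConsec (σ π : List ℕ) : Prop :=
  ∃ B w C, π = B ++ w ++ C ∧ FormsPOP σ w

def OccursSK (σ π : List ℕ) : Prop :=
  ∃ B w C y D, π = B ++ w ++ C ++ y :: D ∧ FormsPOP σ w ∧ ∀ z ∈ w, z < y

theorem List.infix_left_or_right_of_append_eq_append_cons {α : Type*} {B w C L R : List α} {M : α}
    (h : B ++ w ++ C = L ++ M :: R) (hM : M ∉ w) :
    (∃ C', L = B ++ w ++ C') ∨ ∃ B', R = B' ++ w ++ C := by
  rcases List.append_eq_append_iff.mp h with ⟨C', rfl, -⟩ | ⟨_ | ⟨M', R'⟩, hBw, hC⟩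
  · exact .inl ⟨C', rfl⟩
  · exact .inl ⟨[], by simpa using hBw.symm⟩
  obtain ⟨rfl, rfl⟩ := List.cons_eq_cons.mp hC
  rcases List.append_eq_append_iff.mp hBw with ⟨a, rfl, rfl⟩ | ⟨_ | ⟨M', B'⟩, rfl, hw⟩
  · simp at hM
  · rw [List.nil_append] at hw
    simp [← hw] at hM
  · obtain ⟨rfl, rfl⟩ := List.cons_eq_cons.mp hw
    exact .inr ⟨B', by simp⟩

section Split

variable {σ L R : List ℕ} {M : ℕ}

theorem le_of_mem_append_cons (hM : ∀ a ∈ L ++ R, a < M) {x : ℕ} (hx : x ∈ L ++ M :: R) :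
    x ≤ M := by
  rw [List.mem_append, List.mem_cons] at hx
  rcases hx with hx | rfl | hx
  exacts [(hM x (List.mem_append_left R hx)).le, le_rfl, (hM x (List.mem_append_right L hx)).le]

theorem occursKS_append_cons_iff (hM : ∀ a ∈ L ++ R, a < M) :
    OccursKS σ (L ++ M :: R) ↔ OccursKS σ L ∨ OccursConsec σ R := by
  constructor
  · rintro ⟨A, x, B, w, C, h, hw, hwx⟩
    have hx : x ≤ M := le_of_mem_append_cons hM (by simp [h])
    rcases List.infix_left_or_right_of_append_eq_append_cons (B := A ++ x :: B)
      (by simpa using h.symm) (fun hMw => (hwx M hMw).not_ge hx) with ⟨C', rfl⟩ | ⟨B', rfl⟩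
    · exact .inl ⟨A, x, B, w, C', by simp, hw, hwx⟩
    · exact .inr ⟨B', w, C, rfl, hw⟩
  · rintro (⟨A, x, B, w, C, rfl, hw, hwx⟩ | ⟨B, w, C, rfl, hw⟩)
    · exact ⟨A, x, B, w, C ++ M :: R, by simp, hw, hwx⟩
    · exact ⟨L, M, B, w, C, by simp, hw, fun y hy => hM y (by simp [hy])⟩

theorem occursSK_append_cons_iff (hM : ∀ a ∈ L ++ R, a < M) :
    OccursSK σ (L ++ M :: R) ↔ OccursConsec σ L ∨ OccursSK σ R := by
  constructor
  · rintro ⟨B, w, C, y, D, h, hw, hwy⟩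
    have hy : y ≤ M := le_of_mem_append_cons hM (by simp [h])
    rcases List.infix_left_or_right_of_append_eq_append_cons (C := C ++ y :: D)
      (by simpa using h.symm) (fun hMw => (hwy M hMw).not_ge hy) with ⟨C', rfl⟩ | ⟨B', rfl⟩
    · exact .inl ⟨B, w, C', rfl, hw⟩
    · exact .inr ⟨B', w, C, y, D, by simp, hw, hwy⟩
  · rintro (⟨B, w, C, rfl, hw⟩ | ⟨B, w, C, y, D, rfl, hw, hwy⟩)
    · exact ⟨B, w, C, M, R, by simp, hw, fun z hz => hM z (by simp [hz])⟩
    · exact ⟨L ++ M :: B, w, C, y, D, by simp, hw, hwy⟩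

theorem occursKSK_append_cons_iff (hM : ∀ a ∈ L ++ R, a < M) :
    OccursKSK σ (L ++ M :: R) ↔ OccursKS σ L ∨ OccursSK σ R := by
  constructor
  · rintro ⟨A, x, B, w, C, y, D, h, hw, hwx, hwy⟩
    have hx : x ≤ M := le_of_mem_append_cons hM (by simp [h])
    rcases List.infix_left_or_right_of_append_eq_append_cons (B := A ++ x :: B)
      (C := C ++ y :: D) (by simpa using h.symm) (fun hMw => (hwx M hMw).not_ge hx)
      with ⟨C', rfl⟩ | ⟨B', rfl⟩
    · exact .inl ⟨A, x, B, w, C', by simp, hw, hwx⟩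
    · exact .inr ⟨B', w, C, y, D, by simp, hw, hwy⟩
  · rintro (⟨A, x, B, w, C, rfl, hw, hwx⟩ | ⟨B, w, C, y, D, rfl, hw, hwy⟩)
    · exact ⟨A, x, B, w, C, M, R, by simp, hw, hwx, fun z hz => hM z (by simp [hz])⟩
    · exact ⟨L, M, B, w, C, y, D, by simp, hw, fun z hz => hM z (by simp [hz]), hwy⟩

end Split

def OrderInvariant (P : List ℕ → Prop) : Prop :=
  ∀ ⦃f : ℕ → ℕ⦄ ⦃l : List ℕ⦄, StrictMonoOn f {x | x ∈ l} → (P (l.map f) ↔ P l)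

namespace OrderInvariant

variable {P : List ℕ → Prop}

/-- An order-preserving relabelling can be undone by another one, so one direction suffices. -/
theorem of_map (h : ∀ ⦃f : ℕ → ℕ⦄ ⦃l : List ℕ⦄, StrictMonoOn f {x | x ∈ l} → P l → P (l.map f)) :
    OrderInvariant P := by
  intro f l hf
  refine ⟨fun hfl => ?_, h hf⟩
  set g := Function.invFunOn f {x | x ∈ l}
  have hgf : ∀ x ∈ l, g (f x) = x := fun x hx => hf.injOn.leftInvOn_invFunOn hx
  have hg : StrictMonoOn g {y | y ∈ l.map f} := by
    simp only [List.mem_map]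
    rintro _ ⟨a, ha, rfl⟩ _ ⟨b, hb, rfl⟩ hab
    rw [hgf a ha, hgf b hb]
    exact (hf.lt_iff_lt ha hb).mp hab
  have := h hg hfl
  rwa [List.map_map, List.map_congr_left (f := g ∘ f) (g := id) hgf, List.map_id] at this

theorem not (h : OrderInvariant P) : OrderInvariant (¬ P ·) :=
  fun _ _ hf => not_congr (h hf)

end OrderInvariant

section Invariance

variable {σ : List ℕ} {f : ℕ → ℕ}

theorem FormsPOP.map {w : List ℕ} (hf : StrictMonoOn f {x | x ∈ w}) (h : FormsPOP σ w) :
    FormsPOP σ (w.map f) := by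
  obtain ⟨hlen, hord⟩ := h
  refine ⟨by simp [hlen], fun i j hi hj hij => ?_⟩
  have := hord i j hi hj hij
  rw [← hlen] at hi hj
  rw [List.getD_eq_getElem _ _ hi, List.getD_eq_getElem _ _ hj] at this
  rw [List.getD_eq_getElem (w.map f) 0 (by simpa using hi),
    List.getD_eq_getElem (w.map f) 0 (by simpa using hj), List.getElem_map, List.getElem_map]
  exact hf (List.getElem_mem hi) (List.getElem_mem hj) this

theorem orderInvariant_occursConsec : OrderInvariant (OccursConsec σ) := by
  refine .of_map fun f π hf ⟨B, w, C, h, hw⟩ => ⟨B.map f, w.map f, C.map f, by simp [h], hw.map ?_⟩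
  exact hf.mono fun x (hx : x ∈ w) => by simp [h, hx]

theorem orderInvariant_occursKS : OrderInvariant (OccursKS σ) := by
  refine .of_map fun f π hf ⟨A, x, B, w, C, h, hw, hwx⟩ =>
    ⟨A.map f, f x, B.map f, w.map f, C.map f, by simp [h], hw.map (hf.mono ?_), ?_⟩
  · exact fun z (hz : z ∈ w) => by simp [h, hz]
  · simp only [List.mem_map, forall_exists_index, and_imp, forall_apply_eq_imp_iff₂]
    exact fun z hz => hf (by simp [h, hz]) (by simp [h]) (hwx z hz)

theorem orderInvariant_occursSK : OrderInvariant (OccursSK σ) := by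
  refine .of_map fun f π hf ⟨B, w, C, y, D, h, hw, hwy⟩ =>
    ⟨B.map f, w.map f, C.map f, f y, D.map f, by simp [h], hw.map (hf.mono ?_), ?_⟩
  · exact fun z (hz : z ∈ w) => by simp [h, hz]
  · simp only [List.mem_map, forall_exists_index, and_imp, forall_apply_eq_imp_iff₂]
    exact fun z hz => hf (by simp [h, hz]) (by simp [h]) (hwy z hz)

end Invariance

open Finset

theorem List.perm_iff_nodup_and_toFinset_eq {α : Type*} [DecidableEq α] {l t : List α}
    (ht : t.Nodup) : l.Perm t ↔ l.Nodup ∧ l.toFinset = t.toFinset :=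
  ⟨fun h => ⟨h.nodup_iff.mpr ht, List.toFinset_eq_of_perm _ _ h⟩,
    fun ⟨hl, h⟩ => List.perm_of_nodup_nodup_toFinset_eq hl ht h⟩

noncomputable def arrangements (s : Finset ℕ) : Finset (List ℕ) :=
  s.toList.permutations.toFinset

theorem mem_arrangements {s : Finset ℕ} {l : List ℕ} :
    l ∈ arrangements s ↔ l.Nodup ∧ l.toFinset = s := by
  rw [arrangements, List.mem_toFinset, List.mem_permutations,
    List.perm_iff_nodup_and_toFinset_eq s.nodup_toList, toList_toFinset]

theorem isPermOf_iff_mem_arrangements {n : ℕ} {l : List ℕ} :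
    IsPermOf n l ↔ l ∈ arrangements (Icc 1 n) := by
  rw [IsPermOf, List.perm_iff_nodup_and_toFinset_eq (List.nodup_range.map (add_left_injective 1)),
    mem_arrangements]
  have : ((List.range n).map (· + 1)).toFinset = Icc 1 n := by
    ext x
    simp only [List.mem_toFinset, List.mem_map, List.mem_range, mem_Icc]
    exact ⟨by rintro ⟨a, ha, rfl⟩; omega, fun h => ⟨x - 1, by omega, by omega⟩⟩
  rw [this]

theorem append_cons_mem_arrangements_insert {L R : List ℕ} {M : ℕ} {t : Finset ℕ} (hM : M ∉ t) :
    L ++ M :: R ∈ arrangements (insert M t) ↔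
      L.toFinset ⊆ t ∧ L.Nodup ∧ R ∈ arrangements (t \ L.toFinset) := by
  simp only [mem_arrangements, List.nodup_append, List.nodup_cons, Finset.ext_iff, subset_iff,
    List.mem_toFinset, List.mem_append, List.mem_cons, mem_insert, mem_sdiff]
  grind

theorem mem_of_mem_append_of_mem_arrangements_sdiff {L R : List ℕ} {t : Finset ℕ}
    (hL : L.toFinset ⊆ t) (hR : R ∈ arrangements (t \ L.toFinset)) {a : ℕ} (ha : a ∈ L ++ R) :
    a ∈ t := by
  rcases List.mem_append.mp ha with ha | ha
  · exact hL (List.mem_toFinset.mpr ha)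
  · exact (mem_sdiff.mp ((mem_arrangements.mp hR).2 ▸ List.mem_toFinset.mpr ha)).1

section Relabel

variable {s t : Finset ℕ} (e : s ≃o t)

def relabel (x : ℕ) : ℕ :=
  if hx : x ∈ s then e ⟨x, hx⟩ else x

variable {e}

theorem relabel_of_mem {x : ℕ} (hx : x ∈ s) : relabel e x = e ⟨x, hx⟩ :=
  dif_pos hx

theorem relabel_symm_relabel {x : ℕ} (hx : x ∈ s) : relabel e.symm (relabel e x) = x := by
  rw [relabel_of_mem hx, relabel_of_mem (e ⟨x, hx⟩).2]
  simp

theorem strictMonoOn_relabel : StrictMonoOn (relabel e) s := fun x hx y hy hxy => by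
  rw [relabel_of_mem hx, relabel_of_mem hy]
  exact e.strictMono hxy

theorem map_relabel_mem_arrangements {l : List ℕ} (hl : l ∈ arrangements s) :
    l.map (relabel e) ∈ arrangements t := by
  rw [mem_arrangements] at hl ⊢
  obtain ⟨hnd, rfl⟩ := hl
  refine ⟨hnd.map_on fun x hx y hy => (strictMonoOn_relabel.injOn (by simpa) (by simpa) ·), ?_⟩
  ext y
  simp only [List.mem_toFinset, List.mem_map]
  refine ⟨?_, fun hy => ⟨e.symm ⟨y, hy⟩, List.mem_toFinset.mp (e.symm ⟨y, hy⟩).2, ?_⟩⟩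
  · rintro ⟨x, hx, rfl⟩
    rw [relabel_of_mem (List.mem_toFinset.mpr hx)]
    exact (e _).2
  · rw [relabel_of_mem (e.symm ⟨y, hy⟩).2]
    simp

end Relabel

def SplitsAtMax (P P₁ P₂ : List ℕ → Prop) : Prop :=
  ∀ ⦃L R : List ℕ⦄ ⦃M : ℕ⦄, (∀ a ∈ L ++ R, a < M) → (P (L ++ M :: R) ↔ P₁ L ∧ P₂ R)

section Counting

open scoped Classical

variable {P P₁ P₂ : List ℕ → Prop}

noncomputable def permCount (P : List ℕ → Prop) (n : ℕ) : ℕ :=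
  Nat.card {l : List ℕ // IsPermOf n l ∧ P l}

theorem permCount_eq_card_filter (P : List ℕ → Prop) (n : ℕ) :
    permCount P n = #{l ∈ arrangements (Icc 1 n) | P l} := by
  rw [permCount, ← Nat.card_eq_finsetCard]
  exact Nat.card_congr <| Equiv.subtypeEquivRight fun l => by
    rw [isPermOf_iff_mem_arrangements, mem_filter]

theorem card_filter_arrangements_congr (hP : OrderInvariant P) {s t : Finset ℕ} (e : s ≃o t) :
    #{l ∈ arrangements s | P l} = #{l ∈ arrangements t | P l} := by
  have maps : ∀ {s t : Finset ℕ} (e : s ≃o t),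
      Set.MapsTo (List.map (relabel e)) {l | l ∈ arrangements s ∧ P l}
        {l | l ∈ arrangements t ∧ P l} := by
    rintro s t e l ⟨hl, hPl⟩
    refine ⟨map_relabel_mem_arrangements hl, (hP (strictMonoOn_relabel.mono ?_)).mpr hPl⟩
    intro x (hx : x ∈ l)
    simpa [(mem_arrangements.mp hl).2] using List.mem_toFinset.mpr hx
  have inv : ∀ {s t : Finset ℕ} (e : s ≃o t),
      Set.LeftInvOn (List.map (relabel e.symm)) (List.map (relabel e))
        {l | l ∈ arrangements s ∧ P l} := by
    rintro s t e l ⟨hl, -⟩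
    refine (List.map_map ..).trans ((List.map_congr_left fun x hx => ?_).trans l.map_id)
    exact relabel_symm_relabel ((mem_arrangements.mp hl).2 ▸ List.mem_toFinset.mpr hx)
  refine card_nbij' (List.map (relabel e)) (List.map (relabel e.symm)) ?_ ?_ ?_ ?_ <;>
    simp only [coe_filter]
  exacts [maps e, maps e.symm, inv e, e.symm_symm ▸ inv e.symm]

theorem card_filter_arrangements (hP : OrderInvariant P) (s : Finset ℕ) :
    #{l ∈ arrangements s | P l} = permCount P #s := by
  rw [permCount_eq_card_filter]
  exact card_filter_arrangements_congr hP
    ((s.orderIsoOfFin rfl).symm.trans ((Icc 1 #s).orderIsoOfFin (by simp)))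

theorem card_filter_arrangements_insert (hsplit : SplitsAtMax P P₁ P₂) {M : ℕ} {t : Finset ℕ}
    (hM : ∀ a ∈ t, a < M) :
    #{l ∈ arrangements (insert M t) | P l} =
      ∑ u ∈ t.powerset, #{L ∈ arrangements u | P₁ L} * #{R ∈ arrangements (t \ u) | P₂ R} := by
  have hMt : M ∉ t := fun h => (hM M h).false
  have hlt : ∀ {L R : List ℕ}, L.toFinset ⊆ t → R ∈ arrangements (t \ L.toFinset) →
      ∀ a ∈ L ++ R, a < M :=
    fun hL hR a ha => hM a (mem_of_mem_append_of_mem_arrangements_sdiff hL hR ha)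
  simp_rw [← card_product]
  rw [← card_sigma]
  symm
  refine card_bij (fun p _ => p.2.1 ++ M :: p.2.2) ?_ ?_ ?_
  · rintro ⟨u, L, R⟩ hp
    simp only [mem_sigma, mem_powerset, mem_product, mem_filter] at hp
    obtain ⟨hu, ⟨hL, hPL⟩, hR, hPR⟩ := hp
    obtain ⟨hLnd, rfl⟩ := mem_arrangements.mp hL
    rw [mem_filter, append_cons_mem_arrangements_insert hMt, hsplit (hlt hu hR)]
    exact ⟨⟨hu, hLnd, hR⟩, hPL, hPR⟩
  · rintro ⟨u, L, R⟩ hp ⟨u', L', R'⟩ hp' h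
    simp only [mem_sigma, mem_powerset, mem_product, mem_filter, mem_arrangements] at hp hp'
    have hML : ∀ {L : List ℕ} {u : Finset ℕ}, u ⊆ t → L.toFinset = u → M ∉ L :=
      fun hu hL hML => hMt (hu (hL ▸ List.mem_toFinset.mpr hML))
    obtain ⟨rfl, -, rfl⟩ := (List.append_cons_inj_of_notMem (hML hp.1 hp.2.1.1.2)
      (fun hMR => hMt (mem_sdiff.mp (hp.2.2.1.2 ▸ List.mem_toFinset.mpr hMR)).1)).mp h
    obtain rfl := hp.2.1.1.2.symm.trans hp'.2.1.1.2
    rfl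
  · intro l hl
    rw [mem_filter] at hl
    obtain ⟨L, R, rfl⟩ := List.append_of_mem
      (List.mem_toFinset.mp ((mem_arrangements.mp hl.1).2 ▸ mem_insert_self M t))
    obtain ⟨hL, hLnd, hR⟩ := (append_cons_mem_arrangements_insert hMt).mp hl.1
    obtain ⟨hPL, hPR⟩ := (hsplit (hlt hL hR)).mp hl.2
    refine ⟨⟨L.toFinset, L, R⟩, ?_, rfl⟩
    simp only [mem_sigma, mem_powerset, mem_product, mem_filter]
    exact ⟨hL, ⟨mem_arrangements.mpr ⟨hLnd, rfl⟩, hPL⟩, hR, hPR⟩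

theorem permCount_succ (h₁ : OrderInvariant P₁) (h₂ : OrderInvariant P₂)
    (hsplit : SplitsAtMax P P₁ P₂) (n : ℕ) :
    permCount P (n + 1) =
      ∑ i ∈ range (n + 1), n.choose i * (permCount P₁ i * permCount P₂ (n - i)) := by
  rw [permCount_eq_card_filter, ← insert_Icc_right_eq_Icc_add_one (by omega),
    card_filter_arrangements_insert hsplit fun a ha => by simp at ha; omega]
  calc _ = ∑ u ∈ (Icc 1 n).powerset, permCount P₁ #u * permCount P₂ (n - #u) := by
        refine sum_congr rfl fun u hu => ?_
        rw [card_filter_arrangements h₁, card_filter_arrangements h₂,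
          card_sdiff_of_subset (mem_powerset.mp hu), Nat.card_Icc, Nat.add_sub_cancel]
    _ = _ := by
        rw [sum_powerset_apply_card (fun i => permCount P₁ i * permCount P₂ (n - i)),
          Nat.card_Icc, Nat.add_sub_cancel]
        rfl

end Counting

/-- Reflecting the sum shows that `a` satisfies the recurrence of `b`. -/
theorem eq_of_binomial_recurrences {a b c : ℕ → ℕ} (h0 : a 0 = b 0)
    (ha : ∀ n, a (n + 1) = ∑ i ∈ range (n + 1), n.choose i * (a i * c (n - i)))
    (hb : ∀ n, b (n + 1) = ∑ i ∈ range (n + 1), n.choose i * (c i * b (n - i))) : a = b := by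
  funext n
  induction n using Nat.strong_induction_on with
  | _ n ih =>
    cases n with
    | zero => exact h0
    | succ n =>
      rw [ha, hb, ← sum_range_reflect (fun i => n.choose i * (c i * b (n - i)))]
      refine sum_congr rfl fun i hi => ?_
      have hin : i ≤ n := Nat.lt_succ_iff.mp (mem_range.mp hi)
      rw [Nat.add_sub_cancel, Nat.sub_sub_self hin, Nat.choose_symm hin, ih i (by omega)]
      ring

theorem permCount_zero {P : List ℕ → Prop} (h : P []) : permCount P 0 = 1 := by
  simp [permCount_eq_card_filter, arrangements, filter_singleton, h]

theorem not_occursKS_nil {σ : List ℕ} : ¬ OccursKS σ [] :=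
  fun ⟨_, _, _, _, _, h, _⟩ => by simp at h

theorem not_occursSK_nil {σ : List ℕ} : ¬ OccursSK σ [] :=
  fun ⟨_, _, _, _, _, h, _⟩ => by simp at h

theorem count_avoid_ksk_rec_general (σ : List ℕ)
    (g h : ℕ → ℕ)
    (hg : ∀ n, g n = Nat.card {l : List ℕ // IsPermOf n l ∧ ¬ OccursKS σ l})
    (hh : ∀ n, h n = Nat.card {l : List ℕ // IsPermOf n l ∧ ¬ OccursKSK σ l}) :
    ∀ n, h (n + 1) = ∑ i ∈ Finset.range (n + 1), Nat.choose n i * (g i * g (n - i)) := by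
  have hKS : OrderInvariant (¬ OccursKS σ ·) := orderInvariant_occursKS.not
  have hSK : OrderInvariant (¬ OccursSK σ ·) := orderInvariant_occursSK.not
  have hC : OrderInvariant (¬ OccursConsec σ ·) := orderInvariant_occursConsec.not
  have hKS_eq_SK : permCount (¬ OccursKS σ ·) = permCount (¬ OccursSK σ ·) := by
    refine eq_of_binomial_recurrences ?_ (permCount_succ hKS hC ?_) (permCount_succ hC hSK ?_)
    · rw [permCount_zero (P := (¬ OccursKS σ ·)) not_occursKS_nil,
        permCount_zero (P := (¬ OccursSK σ ·)) not_occursSK_nil]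
    · exact fun L R M hM => by rw [occursKS_append_cons_iff hM, not_or]
    · exact fun L R M hM => by rw [occursSK_append_cons_iff hM, not_or]
  intro n
  calc h (n + 1) = permCount (¬ OccursKSK σ ·) (n + 1) := hh (n + 1)
    _ = ∑ i ∈ range (n + 1),
          n.choose i * (permCount (¬ OccursKS σ ·) i * permCount (¬ OccursSK σ ·) (n - i)) :=
      permCount_succ hKS hSK (fun L R M hM => by rw [occursKSK_append_cons_iff hM, not_or]) n
    _ = _ := by rw [← hKS_eq_SK, show g = permCount (¬ OccursKS σ ·) from funext hg]

/-- If `g n` counts `(k-σ)`-avoiders of length `n` and `h n` counts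
`(k-σ-k)`-avoiders, then `h (n+1) = ∑ C(n,i) gᵢ g_{n-i}`. -/
theorem count_avoid_ksk_rec (σ : List ℕ) (hσ : σ ≠ [])
    (g h : ℕ → ℕ)
    (hg : ∀ n, g n = Nat.card {l : List ℕ // IsPermOf n l ∧ ¬ OccursKS σ l})
    (hh : ∀ n, h n = Nat.card {l : List ℕ // IsPermOf n l ∧ ¬ OccursKSK σ l}) :
    ∀ n, h (n + 1) = ∑ i ∈ Finset.range (n + 1), Nat.choose n i * (g i * g (n - i)) :=
  count_avoid_ksk_rec_general σ g h hg hh
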